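/- arXiv:2308.01625 — 2 statements merged into one kernel-verified Lean document; each statement's English description precedes it below -/
import Mathlib

section
/- Let ρ, K, I_ρ, E, I > 0 and l > 0 be real numbers, let ω be a nonzero real number, and let b : [0,l] → ℝ be a continuous nonnegative function for which there exist 0 ≤ b₀ < b₁ ≤ l and b̄ > 0 with b(x) ≥ b̄ for all x ∈ [b₀,b₁]. Let u, v : [0,l] → ℂ be twice continuously differentiable with u(0) = u(l) = v(0) = v(l) = 0, and suppose that on (0,l): K·u'' − K·v' = −ρ·ω²·u and E·I·v'' + K·u' − K·v − i·b·ω·v = −I_ρ·ω²·v. Then u(x) = 0 and v(x) = 0 for all x ∈ [0,l]. -/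
/-!
Multiplying the two equations by `ū` and `v̄` and taking imaginary parts shows that the flux
`F = Im (K u' ū + E I v' v̄ + K u v̄)` satisfies `F' = ω b |v|²`. Since `F` vanishes at both ends
and `ω F` is nondecreasing, `ω F ≡ 0`; hence `b |v|² ≡ 0` and `v` vanishes on `(b₀, b₁)`. The
equations then force `u`, `u'` and `v'` to vanish there too, and uniqueness for the linear
first-order system satisfied by `(u, u', v, v')` propagates this to the whole of `(0, l)`.
-/

open Set Topology Matrix

section LinearODE

variable {𝕜 E : Type*} [NontriviallyNormedField 𝕜] [NormedAddCommGroup E] [NormedSpace ℝ E]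
  [NormedSpace 𝕜 E]

theorem ODE_solution_eqOn_zero_of_linear {A : ℝ → E →L[𝕜] E} {Y : ℝ → E} {a b t₀ : ℝ}
    (hA : ContinuousOn A (Icc a b)) (hY : ∀ t ∈ Ioo a b, HasDerivAt Y (A t (Y t)) t)
    (ht₀ : t₀ ∈ Ioo a b) (hY₀ : Y t₀ = 0) : EqOn Y 0 (Ioo a b) := by
  obtain ⟨C, hC⟩ := isCompact_Icc.exists_bound_of_continuousOn hA
  have hLip : ∀ t ∈ Ioo a b, LipschitzOnWith C.toNNReal (A t) univ := fun t ht =>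
    ((A t).lipschitz.weaken (by
      rw [← NNReal.coe_le_coe, coe_nnnorm, Real.coe_toNNReal']
      exact (hC t (Ioo_subset_Icc_self ht)).trans (le_max_left _ _))).lipschitzOnWith
  exact ODE_solution_unique_of_mem_Ioo hLip ht₀ (fun t ht => ⟨hY t ht, trivial⟩)
    (fun t _ => ⟨by simp only [Pi.zero_apply, map_zero]; exact hasDerivAt_const t 0, trivial⟩) hY₀

end LinearODE

theorem eqOn_zero_of_hasDerivAt_nonneg_of_eq {f f' : ℝ → ℝ} {a b : ℝ}
    (hf : ContinuousOn f (Icc a b)) (hf' : ∀ x ∈ Ioo a b, HasDerivAt f (f' x) x)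
    (hf'₀ : ∀ x ∈ Ioo a b, 0 ≤ f' x) (hab : f a = f b) : EqOn f' 0 (Ioo a b) := by
  have hmono : MonotoneOn f (Icc a b) :=
    monotoneOn_of_hasDerivWithinAt_nonneg (convex_Icc a b) hf
      (by simpa only [interior_Icc] using fun x hx => (hf' x hx).hasDerivWithinAt)
      (by simpa only [interior_Icc] using hf'₀)
  intro x hx
  have hconst : f =ᶠ[𝓝 x] fun _ => f a := by
    filter_upwards [Ioo_mem_nhds hx.1 hx.2] with y hy
    have hy' := Ioo_subset_Icc_self hy
    have hab' : a ≤ b := hy'.1.trans hy'.2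
    exact le_antisymm (hab ▸ hmono hy' (right_mem_Icc.2 hab') hy'.2)
      (hmono (left_mem_Icc.2 hab') hy' hy'.1)
  exact (hf' x hx).unique ((hasDerivAt_const x (f a)).congr_of_eventuallyEq hconst)

theorem derivWithin_Icc_of_mem_Ioo {F : Type*} [NormedAddCommGroup F] [NormedSpace ℝ F]
    {f : ℝ → F} {a b x : ℝ} (hx : x ∈ Ioo a b) : derivWithin f (Icc a b) x = deriv f x :=
  derivWithin_of_mem_nhds (Icc_mem_nhds hx.1 hx.2)

theorem DifferentiableOn.hasDerivAt_of_mem_Ioo {F : Type*} [NormedAddCommGroup F]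
    [NormedSpace ℝ F] {f : ℝ → F} {a b x : ℝ} (hf : DifferentiableOn ℝ f (Icc a b))
    (hx : x ∈ Ioo a b) :
    HasDerivAt f (derivWithin f (Icc a b) x) x := by
  rw [derivWithin_Icc_of_mem_Ioo hx]
  exact (hf.differentiableAt (Icc_mem_nhds hx.1 hx.2)).hasDerivAt

theorem ContDiffOn.hasDerivAt_derivWithin_of_mem_Ioo {F : Type*} [NormedAddCommGroup F]
    [NormedSpace ℝ F] {f : ℝ → F} {a b x : ℝ} (hf : ContDiffOn ℝ 2 f (Icc a b))
    (hx : x ∈ Ioo a b) : HasDerivAt (derivWithin f (Icc a b)) (deriv (deriv f) x) x := by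
  have hderiv : derivWithin f (Icc a b) =ᶠ[𝓝 x] deriv f := by
    filter_upwards [Ioo_mem_nhds hx.1 hx.2] with y hy using derivWithin_Icc_of_mem_Ioo hy
  have h1 : ContDiffOn ℝ 1 (deriv f) (Ioo a b) :=
    (hf.mono Ioo_subset_Icc_self).deriv_of_isOpen isOpen_Ioo (by norm_num)
  exact (((h1.differentiableOn one_ne_zero).differentiableAt
    (Ioo_mem_nhds hx.1 hx.2)).hasDerivAt).congr_of_eventuallyEq hderiv

noncomputable section

/-- `(u, u', v, v')` solves `Y' = (timoshenkoMatrix + b • timoshenkoDampingMatrix) Y`. -/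
def timoshenkoMatrix (ρ K Iρ E I ω : ℝ) : Matrix (Fin 4) (Fin 4) ℂ :=
  !![0, 1, 0, 0;
     -(ρ * ω ^ 2 / K), 0, 0, 1;
     0, 0, 0, 1;
     0, -(K / (E * I)), (K - Iρ * ω ^ 2) / (E * I), 0]

def timoshenkoDampingMatrix (E I ω : ℝ) : Matrix (Fin 4) (Fin 4) ℂ :=
  !![0, 0, 0, 0;
     0, 0, 0, 0;
     0, 0, 0, 0;
     0, 0, Complex.I * ω / (E * I), 0]

def timoshenkoOperator (ρ K Iρ E I ω β : ℝ) : (Fin 4 → ℂ) →L[ℂ] Fin 4 → ℂ :=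
  LinearMap.toContinuousLinearMap
    (toLin' (timoshenkoMatrix ρ K Iρ E I ω + (β : ℂ) • timoshenkoDampingMatrix E I ω))

def timoshenkoFlux (K E I : ℝ) (u u' v v' : ℝ → ℂ) (x : ℝ) : ℝ :=
  ((K : ℂ) * u' x * star (u x) + (E : ℂ) * (I : ℂ) * v' x * star (v x)
    + (K : ℂ) * u x * star (v x)).im

end

theorem continuous_timoshenkoOperator (ρ K Iρ E I ω : ℝ) :
    Continuous (timoshenkoOperator ρ K Iρ E I ω) :=
  (LinearMap.continuous_of_finiteDimensional
    ((LinearMap.toContinuousLinearMap : ((Fin 4 → ℂ) →ₗ[ℂ] Fin 4 → ℂ) ≃ₗ[ℂ] _).toLinearMap ∘ₗ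
      (toLin' : Matrix (Fin 4) (Fin 4) ℂ ≃ₗ[ℂ] _).toLinearMap)).comp (by fun_prop)

theorem timoshenkoOperator_apply (ρ K Iρ E I ω β : ℝ) (a a' c c' : ℂ) :
    timoshenkoOperator ρ K Iρ E I ω β ![a, a', c, c'] =
      ![a', c' - ρ * ω ^ 2 / K * a, c',
        ((K - Iρ * ω ^ 2) * c + Complex.I * β * ω * c - K * a') / (E * I)] := by
  ext i
  fin_cases i <;>
    simp [timoshenkoOperator, timoshenkoMatrix, timoshenkoDampingMatrix, mulVec, dotProduct,
      Fin.sum_univ_four] <;> ring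

section Pointwise

variable {ρ K Iρ E I ω β x : ℝ} {u u' v v' : ℝ → ℂ} {u'' v'' : ℂ}
  (hu : HasDerivAt u (u' x) x) (hu' : HasDerivAt u' u'' x)
  (hv : HasDerivAt v (v' x) x) (hv' : HasDerivAt v' v'' x)
  (e1 : (K : ℂ) * u'' - K * v' x = -(ρ * ω ^ 2) * u x)
  (e2 : (E : ℂ) * I * v'' + K * u' x - K * v x - Complex.I * β * ω * v x
    = -(Iρ * ω ^ 2) * v x)
include hu hu' hv hv' e1 e2

theorem hasDerivAt_timoshenkoFlux :
    HasDerivAt (timoshenkoFlux K E I u u' v v') (ω * β * Complex.normSq (v x)) x := by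
  have hprod := ((((hu'.const_mul (K : ℂ)).mul hu.star).add
    ((hv'.const_mul ((E : ℂ) * I)).mul hv.star)).add ((hu.const_mul (K : ℂ)).mul hv.star))
  refine (Complex.imCLM.hasFDerivAt.comp_hasDerivAt x hprod).congr_deriv ?_
  rw [Complex.imCLM_apply]
  have e1re := congrArg Complex.re e1
  have e1im := congrArg Complex.im e1
  have e2re := congrArg Complex.re e2
  have e2im := congrArg Complex.im e2
  simp only [Complex.add_re, Complex.add_im, Complex.sub_re, Complex.sub_im,
    Complex.mul_re, Complex.mul_im, Complex.neg_re, Complex.neg_im, Complex.ofReal_re,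
    Complex.ofReal_im, Complex.I_re, Complex.I_im, Complex.normSq_apply, Complex.star_def,
    Complex.conj_re, Complex.conj_im, pow_two] at e1re e1im e2re e2im ⊢
  -- the identity is the imaginary part of `e1 * ū + e2 * v̄`
  linear_combination (-(u x).im) * e1re + (u x).re * e1im + (-(v x).im) * e2re + (v x).re * e2im

theorem hasDerivAt_timoshenkoState (hK : K ≠ 0) (hEI : E * I ≠ 0) :
    HasDerivAt (fun t => ![u t, u' t, v t, v' t])
      (timoshenkoOperator ρ K Iρ E I ω β ![u x, u' x, v x, v' x]) x := by
  have hKc : (K : ℂ) ≠ 0 := Complex.ofReal_ne_zero.2 hK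
  have hEIc : (E : ℂ) * I ≠ 0 := by exact_mod_cast hEI
  have hu'' : u'' = v' x - ρ * ω ^ 2 / K * u x := by
    field_simp
    linear_combination e1
  have hv'' : v'' = ((K - Iρ * ω ^ 2) * v x + Complex.I * β * ω * v x - K * u' x) / (E * I) := by
    rw [eq_div_iff hEIc]
    linear_combination e2
  rw [timoshenkoOperator_apply, hasDerivAt_pi]
  intro i
  fin_cases i
  · exact hu
  · exact hu'' ▸ hu'
  · exact hv
  · exact hv'' ▸ hv'

end Pointwise

section Eigenfunction

variable {ρ K Iρ E I ω l : ℝ} {b : ℝ → ℝ} {u v : ℝ → ℂ}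

theorem timoshenko_damping_eq_zero (hl : 0 < l) (hω : ω ≠ 0)
    (hbnonneg : ∀ x ∈ Icc 0 l, 0 ≤ b x)
    (hu : ContDiffOn ℝ 2 u (Icc 0 l)) (hv : ContDiffOn ℝ 2 v (Icc 0 l))
    (hu0 : u 0 = 0) (hul : u l = 0) (hv0 : v 0 = 0) (hvl : v l = 0)
    (heq1 : ∀ x ∈ Ioo 0 l,
      (K : ℂ) * deriv (deriv u) x - K * deriv v x = -(ρ * ω ^ 2) * u x)
    (heq2 : ∀ x ∈ Ioo 0 l,
      (E : ℂ) * I * deriv (deriv v) x + K * deriv u x - K * v x - Complex.I * b x * ω * v x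
        = -(Iρ * ω ^ 2) * v x) :
    ∀ x ∈ Ioo 0 l, b x * Complex.normSq (v x) = 0 := by
  -- `derivWithin` rather than `deriv`, so that the flux is continuous up to the endpoints
  set u' := derivWithin u (Icc 0 l)
  set v' := derivWithin v (Icc 0 l)
  have hflux : ∀ x ∈ Ioo 0 l, HasDerivAt (fun y => ω * timoshenkoFlux K E I u u' v v' y)
      (ω * (ω * b x * Complex.normSq (v x))) x := by
    intro x hx
    have e1 : (K : ℂ) * deriv (deriv u) x - K * v' x = -(ρ * ω ^ 2) * u x := by
      simpa only [v', derivWithin_Icc_of_mem_Ioo hx] using heq1 x hx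
    have e2 : (E : ℂ) * I * deriv (deriv v) x + K * u' x - K * v x
        - Complex.I * b x * ω * v x = -(Iρ * ω ^ 2) * v x := by
      simpa only [u', derivWithin_Icc_of_mem_Ioo hx] using heq2 x hx
    exact (hasDerivAt_timoshenkoFlux ((hu.differentiableOn two_ne_zero).hasDerivAt_of_mem_Ioo hx)
      (hu.hasDerivAt_derivWithin_of_mem_Ioo hx)
      ((hv.differentiableOn two_ne_zero).hasDerivAt_of_mem_Ioo hx)
      (hv.hasDerivAt_derivWithin_of_mem_Ioo hx) e1 e2).const_mul ω
  have hcont : ContinuousOn (fun y => ω * timoshenkoFlux K E I u u' v v' y) (Icc 0 l) := by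
    have hu' := hu.continuousOn_derivWithin (uniqueDiffOn_Icc hl) one_le_two
    have hv' := hv.continuousOn_derivWithin (uniqueDiffOn_Icc hl) one_le_two
    have hu := hu.continuousOn
    have hv := hv.continuousOn
    unfold timoshenkoFlux
    fun_prop
  intro x hx
  have := eqOn_zero_of_hasDerivAt_nonneg_of_eq hcont hflux (fun y hy => by
      have := mul_nonneg (mul_self_nonneg ω)
        (mul_nonneg (hbnonneg y (Ioo_subset_Icc_self hy)) (Complex.normSq_nonneg (v y)))
      linarith)
    (by simp [timoshenkoFlux, hu0, hul, hv0, hvl]) hx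
  simpa [hω] using this

theorem timoshenko_hasDerivAt_state (hK : K ≠ 0) (hEI : E * I ≠ 0)
    (hu : ContDiffOn ℝ 2 u (Icc 0 l)) (hv : ContDiffOn ℝ 2 v (Icc 0 l))
    (heq1 : ∀ x ∈ Ioo 0 l,
      (K : ℂ) * deriv (deriv u) x - K * deriv v x = -(ρ * ω ^ 2) * u x)
    (heq2 : ∀ x ∈ Ioo 0 l,
      (E : ℂ) * I * deriv (deriv v) x + K * deriv u x - K * v x - Complex.I * b x * ω * v x
        = -(Iρ * ω ^ 2) * v x) (x : ℝ) (hx : x ∈ Ioo 0 l) :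
    HasDerivAt (fun t => ![u t, derivWithin u (Icc 0 l) t, v t, derivWithin v (Icc 0 l) t])
      (timoshenkoOperator ρ K Iρ E I ω (b x)
        ![u x, derivWithin u (Icc 0 l) x, v x, derivWithin v (Icc 0 l) x]) x := by
  refine hasDerivAt_timoshenkoState ((hu.differentiableOn two_ne_zero).hasDerivAt_of_mem_Ioo hx)
    (hu.hasDerivAt_derivWithin_of_mem_Ioo hx)
    ((hv.differentiableOn two_ne_zero).hasDerivAt_of_mem_Ioo hx)
    (hv.hasDerivAt_derivWithin_of_mem_Ioo hx) ?_ ?_ hK hEI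
  · simpa only [derivWithin_Icc_of_mem_Ioo hx] using heq1 x hx
  · simpa only [derivWithin_Icc_of_mem_Ioo hx] using heq2 x hx

theorem timoshenko_eqOn_zero_of_eqOn_zero {U : Set ℝ} (hU : IsOpen U) (hUl : U ⊆ Ioo 0 l)
    (hρ : ρ ≠ 0) (hK : K ≠ 0) (hω : ω ≠ 0)
    (heq1 : ∀ x ∈ Ioo 0 l,
      (K : ℂ) * deriv (deriv u) x - K * deriv v x = -(ρ * ω ^ 2) * u x)
    (heq2 : ∀ x ∈ Ioo 0 l,
      (E : ℂ) * I * deriv (deriv v) x + K * deriv u x - K * v x - Complex.I * b x * ω * v x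
        = -(Iρ * ω ^ 2) * v x) (hvU : EqOn v 0 U) :
    EqOn u 0 U ∧ EqOn (deriv u) 0 U ∧ EqOn (deriv v) 0 U := by
  have hv' : EqOn (deriv v) 0 U := by simpa only [deriv_zero] using hvU.deriv hU
  have hv'' : EqOn (deriv (deriv v)) 0 U := by simpa only [deriv_zero] using hv'.deriv hU
  have hu' : EqOn (deriv u) 0 U := fun x hx => by
    simpa [hvU hx, hv'' hx, hK] using heq2 x (hUl hx)
  have hu'' : EqOn (deriv (deriv u)) 0 U := by simpa only [deriv_zero] using hu'.deriv hU
  refine ⟨fun x hx => ?_, hu', hv'⟩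
  simpa [hu'' hx, hv' hx, hρ, hω] using heq1 x (hUl hx)

end Eigenfunction

theorem stmt_4_general (ρ K Iρ E I l ω : ℝ)
    (hρ : 0 < ρ) (hK : 0 < K) (hE : 0 < E) (hI : 0 < I) (hl : 0 < l)
    (hω : ω ≠ 0)
    (b : ℝ → ℝ) (hb : ContinuousOn b (Set.Icc 0 l))
    (hbnonneg : ∀ x ∈ Set.Icc (0 : ℝ) l, 0 ≤ b x)
    (b₀ b₁ bbar : ℝ) (hb₀ : 0 ≤ b₀) (hb₀₁ : b₀ < b₁) (hb₁ : b₁ ≤ l) (hbbar : 0 < bbar)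
    (hblower : ∀ x ∈ Set.Icc b₀ b₁, bbar ≤ b x)
    (u v : ℝ → ℂ)
    (hu : ContDiffOn ℝ 2 u (Set.Icc 0 l))
    (hv : ContDiffOn ℝ 2 v (Set.Icc 0 l))
    (hu0 : u 0 = 0) (hul : u l = 0) (hv0 : v 0 = 0) (hvl : v l = 0)
    (heq1 : ∀ x ∈ Set.Ioo (0 : ℝ) l,
      (K : ℂ) * deriv (deriv u) x - (K : ℂ) * deriv v x
        = -((ρ : ℂ) * (ω : ℂ) ^ 2) * u x)
    (heq2 : ∀ x ∈ Set.Ioo (0 : ℝ) l,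
      (E : ℂ) * (I : ℂ) * deriv (deriv v) x + (K : ℂ) * deriv u x - (K : ℂ) * v x
        - Complex.I * (b x : ℂ) * (ω : ℂ) * v x
        = -((Iρ : ℂ) * (ω : ℂ) ^ 2) * v x) :
    ∀ x ∈ Set.Icc (0 : ℝ) l, u x = 0 ∧ v x = 0 := by
  have hsub : Ioo b₀ b₁ ⊆ Ioo 0 l := Ioo_subset_Ioo hb₀ hb₁
  have hvU : EqOn v 0 (Ioo b₀ b₁) := fun x hx => by
    have hbx : b x ≠ 0 := (hbbar.trans_le (hblower x (Ioo_subset_Icc_self hx))).ne'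
    simpa [hbx] using timoshenko_damping_eq_zero hl hω hbnonneg hu hv hu0 hul hv0 hvl
      heq1 heq2 x (hsub hx)
  obtain ⟨huU, hu'U, hv'U⟩ := timoshenko_eqOn_zero_of_eqOn_zero isOpen_Ioo hsub hρ.ne' hK.ne' hω
    heq1 heq2 hvU
  obtain ⟨c, hc⟩ := nonempty_Ioo.2 hb₀₁
  have hY := ODE_solution_eqOn_zero_of_linear
    ((continuous_timoshenkoOperator ρ K Iρ E I ω).comp_continuousOn hb)
    (timoshenko_hasDerivAt_state hK.ne' (mul_pos hE hI).ne' hu hv heq1 heq2) (hsub hc)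
    (by simp [derivWithin_Icc_of_mem_Ioo (hsub hc), huU hc, hu'U hc, hvU hc, hv'U hc])
  intro x hx
  rcases hx.1.eq_or_lt with rfl | h0
  · exact ⟨hu0, hv0⟩
  rcases hx.2.eq_or_lt with rfl | hl'
  · exact ⟨hul, hvl⟩
  have hYx := congrFun (hY ⟨h0, hl'⟩)
  exact ⟨hYx 0, hYx 2⟩

/-- System (2.6): an eigenvector of the damped Timoshenko operator associated with
a purely imaginary eigenvalue vanishes identically: no purely imaginary eigenvalues. -/
theorem stmt_4 (ρ K Iρ E I l ω : ℝ)
    (hρ : 0 < ρ) (hK : 0 < K) (hIρ : 0 < Iρ) (hE : 0 < E) (hI : 0 < I) (hl : 0 < l)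
    (hω : ω ≠ 0)
    (b : ℝ → ℝ) (hb : ContinuousOn b (Set.Icc 0 l))
    (hbnonneg : ∀ x ∈ Set.Icc (0 : ℝ) l, 0 ≤ b x)
    (b₀ b₁ bbar : ℝ) (hb₀ : 0 ≤ b₀) (hb₀₁ : b₀ < b₁) (hb₁ : b₁ ≤ l) (hbbar : 0 < bbar)
    (hblower : ∀ x ∈ Set.Icc b₀ b₁, bbar ≤ b x)
    (u v : ℝ → ℂ)
    (hu : ContDiffOn ℝ 2 u (Set.Icc 0 l))
    (hv : ContDiffOn ℝ 2 v (Set.Icc 0 l))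
    (hu0 : u 0 = 0) (hul : u l = 0) (hv0 : v 0 = 0) (hvl : v l = 0)
    (heq1 : ∀ x ∈ Set.Ioo (0 : ℝ) l,
      (K : ℂ) * deriv (deriv u) x - (K : ℂ) * deriv v x
        = -((ρ : ℂ) * (ω : ℂ) ^ 2) * u x)
    (heq2 : ∀ x ∈ Set.Ioo (0 : ℝ) l,
      (E : ℂ) * (I : ℂ) * deriv (deriv v) x + (K : ℂ) * deriv u x - (K : ℂ) * v x
        - Complex.I * (b x : ℂ) * (ω : ℂ) * v x
        = -((Iρ : ℂ) * (ω : ℂ) ^ 2) * v x) :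
    ∀ x ∈ Set.Icc (0 : ℝ) l, u x = 0 ∧ v x = 0 :=
  stmt_4_general ρ K Iρ E I l ω hρ hK hE hI hl hω b hb hbnonneg b₀ b₁ bbar hb₀ hb₀₁ hb₁ hbbar
    hblower u v hu hv hu0 hul hv0 hvl heq1 heq2
end

section
/- Let G be a complex Banach space, G₀ a closed linear subspace of G with inclusion map ι : G₀ → G, and let P : G → G₀ be a bounded linear operator such that P(ι(x)) = x for every x ∈ G₀. For a bounded linear operator T on a Banach space Y, write ‖T‖_ess = inf{‖T + K‖ : K is a compact linear operator on Y}. Then for every bounded linear operator R on G₀: limsup_{n→∞} (‖(ι ∘ R ∘ P)ⁿ‖_ess)^{1/n} = limsup_{n→∞} (‖Rⁿ‖_ess)^{1/n}, where the first essential norm is taken in the bounded operators on G and the second in the bounded operators on G₀. -/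
/-!
The compact operators form an ideal, so `‖L T M‖_ess ≤ ‖L‖ ‖M‖ ‖T‖_ess` for bounded `L`, `M`.
Since `P ι = 1`, the powers satisfy `(ι R P)ⁿ = ι Rⁿ P` and `Rⁿ = P (ι Rⁿ P) ι` for `n ≥ 1`,
so the two sequences of essential norms dominate each other up to the constant `‖ι‖ ‖P‖`,
which disappears under `n`-th roots.
-/

open Filter

/-- The essential (Calkin quotient) norm of a bounded operator on a complex Banach
space: the distance to the compact operators. -/
noncomputable def essNorm {Y : Type*} [NormedAddCommGroup Y] [NormedSpace ℂ Y]
    (T : Y →L[ℂ] Y) : ℝ :=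
  sInf ((fun C : Y →L[ℂ] Y => ‖T + C‖) '' {C : Y →L[ℂ] Y | IsCompactOperator (⇑C)})

open Topology ContinuousLinearMap

section EssNorm

variable {X Y : Type*} [NormedAddCommGroup X] [NormedSpace ℂ X]
  [NormedAddCommGroup Y] [NormedSpace ℂ Y]

instance : Nonempty {C : X →L[ℂ] X // IsCompactOperator C} :=
  ⟨⟨0, isCompactOperator_zero⟩⟩

lemma essNorm_eq_iInf (T : X →L[ℂ] X) :
    essNorm T = ⨅ K : {C : X →L[ℂ] X // IsCompactOperator C}, ‖T + K‖ := by
  rw [essNorm, sInf_image']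
  rfl

lemma essNorm_nonneg (T : X →L[ℂ] X) : 0 ≤ essNorm T := by
  rw [essNorm_eq_iInf]
  exact Real.iInf_nonneg fun _ => norm_nonneg _

lemma essNorm_le_norm_add (T : X →L[ℂ] X) {K : X →L[ℂ] X} (hK : IsCompactOperator K) :
    essNorm T ≤ ‖T + K‖ := by
  rw [essNorm_eq_iInf]
  refine ciInf_le ⟨0, ?_⟩ (⟨K, hK⟩ : {C : X →L[ℂ] X // IsCompactOperator C})
  rintro _ ⟨K, rfl⟩
  exact norm_nonneg _

lemma essNorm_le_norm (T : X →L[ℂ] X) : essNorm T ≤ ‖T‖ := by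
  simpa using essNorm_le_norm_add T (K := 0) (by simpa using isCompactOperator_zero)

lemma essNorm_comp_comp_le (L : X →L[ℂ] Y) (T : X →L[ℂ] X) (M : Y →L[ℂ] X) :
    essNorm (L ∘L T ∘L M) ≤ ‖L‖ * ‖M‖ * essNorm T := by
  rw [essNorm_eq_iInf T, Real.mul_iInf_of_nonneg (by positivity)]
  refine le_ciInf fun ⟨K, hK⟩ => ?_
  calc essNorm (L ∘L T ∘L M) ≤ ‖L ∘L T ∘L M + L ∘L K ∘L M‖ :=
        essNorm_le_norm_add _ ((hK.comp_clm M).clm_comp L)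
    _ = ‖L ∘L (T + K) ∘L M‖ := by rw [add_comp, comp_add]
    _ ≤ ‖L‖ * (‖T + K‖ * ‖M‖) :=
        (opNorm_comp_le _ _).trans (by gcongr; exact opNorm_comp_le _ _)
    _ = ‖L‖ * ‖M‖ * ‖T + K‖ := by ring

lemma essNorm_pow_rpow_le (T : X →L[ℂ] X) (n : ℕ) :
    essNorm (T ^ n) ^ (1 / (n : ℝ)) ≤ max ‖T‖ 1 := by
  rcases n.eq_zero_or_pos with rfl | hn
  · simp
  calc essNorm (T ^ n) ^ (1 / (n : ℝ)) ≤ (‖T‖ ^ n) ^ (1 / (n : ℝ)) := by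
        gcongr
        · exact essNorm_nonneg _
        · exact (essNorm_le_norm _).trans (norm_pow_le' T hn)
    _ = ‖T‖ := by rw [one_div, Real.pow_rpow_inv_natCast (norm_nonneg T) hn.ne']
    _ ≤ max ‖T‖ 1 := le_max_left _ _

lemma comp_comp_pow_succ {L : Y →L[ℂ] X} {M : X →L[ℂ] Y} (hML : ∀ y, M (L y) = y)
    (R : Y →L[ℂ] Y) (n : ℕ) : (L ∘L R ∘L M) ^ (n + 1) = L ∘L (R ^ (n + 1)) ∘L M := by
  induction n with
  | zero => simp
  | succ n ih =>
    rw [pow_succ, ih]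
    ext x
    simp [hML, pow_succ]

end EssNorm

lemma limsup_rpow_le_of_le_mul {a b : ℕ → ℝ} {c : ℝ} (ha : 0 ≤ a) (hb : 0 ≤ b)
    (hb_bdd : IsBoundedUnder (· ≤ ·) atTop fun n => b n ^ (1 / (n : ℝ)))
    (hab : ∀ᶠ n in atTop, a n ≤ c * b n) :
    limsup (fun n => a n ^ (1 / (n : ℝ))) atTop ≤
      limsup (fun n => b n ^ (1 / (n : ℝ))) atTop := by
  set c' := max c 1
  have hc' : 0 < c' := lt_max_of_lt_right one_pos
  have hroot : Tendsto (fun n : ℕ => c' ^ (1 / (n : ℝ))) atTop (𝓝 1) := by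
    simpa using tendsto_const_nhds.rpow tendsto_one_div_atTop_nhds_zero_nat (Or.inl hc'.ne')
  have hle : ∀ᶠ n in atTop,
      a n ^ (1 / (n : ℝ)) ≤ c' ^ (1 / (n : ℝ)) * b n ^ (1 / (n : ℝ)) := by
    filter_upwards [hab] with n hn
    rw [← Real.mul_rpow hc'.le (hb n)]
    gcongr
    · exact ha n
    · exact hn.trans (mul_le_mul_of_nonneg_right (le_max_left _ _) (hb n))
  have hb_nonneg : 0 ≤ᶠ[atTop] fun n => b n ^ (1 / (n : ℝ)) :=
    Eventually.of_forall fun n => Real.rpow_nonneg (hb n) _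
  have hroot_nonneg : ∃ᶠ n : ℕ in atTop, 0 ≤ c' ^ (1 / (n : ℝ)) :=
    Frequently.of_forall fun _ => Real.rpow_nonneg hc'.le _
  calc limsup (fun n => a n ^ (1 / (n : ℝ))) atTop
      ≤ limsup (fun n : ℕ => c' ^ (1 / (n : ℝ)) * b n ^ (1 / (n : ℝ))) atTop :=
        limsup_le_limsup hle
          (isCoboundedUnder_le_of_le atTop fun n => Real.rpow_nonneg (ha n) _)
          (isBoundedUnder_le_mul_of_nonneg hroot_nonneg hroot.isBoundedUnder_le
            hb_nonneg hb_bdd)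
    _ ≤ limsup (fun n : ℕ => c' ^ (1 / (n : ℝ))) atTop *
          limsup (fun n => b n ^ (1 / (n : ℝ))) atTop :=
        limsup_mul_le hroot_nonneg hroot.isBoundedUnder_le hb_nonneg hb_bdd
    _ = limsup (fun n => b n ^ (1 / (n : ℝ))) atTop := by rw [hroot.limsup_eq, one_mul]

theorem stmt_15_general {G : Type*} [NormedAddCommGroup G] [NormedSpace ℂ G]
    (G₀ : Submodule ℂ G)
    (P : G →L[ℂ] G₀) (hP : ∀ x : G₀, P (x : G) = x)
    (R : G₀ →L[ℂ] G₀) :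
    limsup (fun n : ℕ =>
        essNorm ((G₀.subtypeL.comp (R.comp P)) ^ n) ^ (1 / (n : ℝ))) atTop
      = limsup (fun n : ℕ => essNorm (R ^ n) ^ (1 / (n : ℝ))) atTop := by
  set ι := G₀.subtypeL
  have hpow : ∀ᶠ n in atTop, (ι ∘L R ∘L P) ^ n = ι ∘L (R ^ n) ∘L P := by
    filter_upwards [eventually_ge_atTop 1] with n hn
    obtain ⟨k, rfl⟩ := Nat.exists_eq_add_of_le' hn
    exact comp_comp_pow_succ hP R k
  have hR : ∀ n, R ^ n = P ∘L (ι ∘L (R ^ n) ∘L P) ∘L ι := fun n => by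
    ext x
    simp [ι, hP]
  apply le_antisymm
  · refine limsup_rpow_le_of_le_mul (c := ‖ι‖ * ‖P‖) (fun _ => essNorm_nonneg _)
      (fun _ => essNorm_nonneg _) (isBoundedUnder_of ⟨_, essNorm_pow_rpow_le R⟩) ?_
    filter_upwards [hpow] with n hn
    rw [hn]
    exact essNorm_comp_comp_le _ _ _
  · refine limsup_rpow_le_of_le_mul (c := ‖P‖ * ‖ι‖) (fun _ => essNorm_nonneg _)
      (fun _ => essNorm_nonneg _)
      (isBoundedUnder_of ⟨_, essNorm_pow_rpow_le (ι ∘L R ∘L P)⟩) ?_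
    filter_upwards [hpow] with n hn
    rw [hn, congrArg essNorm (hR n)]
    exact essNorm_comp_comp_le _ _ _

/-- Proposition `UptoPiB` (Banach-space generalization of Proposition `UptoPi`):
a bounded operator `P : G → G₀` restricting to the identity on the closed subspace
`G₀` does not change the essential spectral radius under right composition. -/
theorem stmt_15 {G : Type*} [NormedAddCommGroup G] [NormedSpace ℂ G] [CompleteSpace G]
    (G₀ : Submodule ℂ G) (hG₀ : IsClosed (G₀ : Set G))
    (P : G →L[ℂ] G₀) (hP : ∀ x : G₀, P (x : G) = x)
    (R : G₀ →L[ℂ] G₀) :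
    limsup (fun n : ℕ =>
        essNorm ((G₀.subtypeL.comp (R.comp P)) ^ n) ^ (1 / (n : ℝ))) atTop
      = limsup (fun n : ℕ => essNorm (R ^ n) ^ (1 / (n : ℝ))) atTop :=
  stmt_15_general G₀ P hP R
end
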